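/- arXiv:1211.3301 — 3 statements merged into one kernel-verified Lean document; each statement's English description precedes it below -/
import Mathlib

section
/- Let X_1, X_2, … be i.i.d. random variables with E X_k = 0, Var X_k = 1 such that φ(t) = log E e^{t X_1} is finite on [0, t_0) for some t_0 > 0, and assume that for some α < 2 one has P[X_1 > x] > e^{−x^α} for all sufficiently large x. Then for every a > 0, lim_{n→∞} P[ M_n = M_n(1, a log n) ] = 1. -/
/-!
Take the threshold `u n = (log n / 2) ^ (1 / α)`, so that `P[X₁ > u n] > n ^ (-1/2)`. Then some
single step among `X₁, …, Xₙ` exceeds `u n`, except with probability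
`(1 - n ^ (-1/2)) ^ n ≤ e ^ (-√n)`, and a single step is a window of length `1`. Since `α < 2`,
`u n` is of larger order than `√(log n)`; the exponential moments give `cgf t ≤ K t²` for small
`t ≥ 0`, so a Chernoff bound with optimised `t` shows that a given window of length `L > a log n`
reaches height `u n * √L` with probability at most `n⁻³`, and a union bound over the `(n + 1) ^ 2`
windows makes this negligible. Outside these two events the scan maximum is attained at a window
of length at most `a log n`.
-/

open MeasureTheory ProbabilityTheory Filter

noncomputable section

/-- Partial sums of the sequence `X` (here `X k` plays the role of `X_{k+1}`),
so `pSum X n = X_1 + ⋯ + X_n` and `pSum X 0 = 0`. -/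
def pSum {Ω : Type*} (X : ℕ → Ω → ℝ) (n : ℕ) (ω : Ω) : ℝ := ∑ k ∈ Finset.range n, X k ω

/-- The multiscale scan statistic `M_n = max_{0 ≤ i < j ≤ n} (S_j - S_i)/√(j-i)`. -/
noncomputable def scanStat {Ω : Type*} (X : ℕ → Ω → ℝ) (n : ℕ) (ω : Ω) : ℝ :=
  ⨆ p : {p : ℕ × ℕ // p.1 < p.2 ∧ p.2 ≤ n},
    (pSum X p.1.2 ω - pSum X p.1.1 ω) / Real.sqrt ((p.1.2 : ℝ) - (p.1.1 : ℝ))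

/-- The restricted multiscale scan statistic
`M_n(h₁,h₂) = max_{0 ≤ i < j ≤ n, h₁ ≤ j-i ≤ h₂} (S_j - S_i)/√(j-i)`. -/
noncomputable def scanStatR {Ω : Type*} (X : ℕ → Ω → ℝ) (n : ℕ) (h₁ h₂ : ℝ) (ω : Ω) : ℝ :=
  ⨆ p : {p : ℕ × ℕ // p.1 < p.2 ∧ p.2 ≤ n ∧
      h₁ ≤ (p.2 : ℝ) - (p.1 : ℝ) ∧ (p.2 : ℝ) - (p.1 : ℝ) ≤ h₂},
    (pSum X p.1.2 ω - pSum X p.1.1 ω) / Real.sqrt ((p.1.2 : ℝ) - (p.1.1 : ℝ))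

lemma finite_subtype_of_lt_of_le {n : ℕ} {P : ℕ × ℕ → Prop}
    (hP : ∀ p, P p → p.1 < p.2 ∧ p.2 ≤ n) : Finite {p : ℕ × ℕ // P p} := by
  refine Set.Finite.to_subtype <|
    (Finset.range (n + 1) ×ˢ Finset.range (n + 1)).finite_toSet.subset fun p hp => ?_
  have := hP p hp
  simp only [Finset.coe_product, Finset.coe_range, Set.mem_prod, Set.mem_Iio]
  omega

lemma pSum_succ_sub {Ω : Type*} (X : ℕ → Ω → ℝ) (k : ℕ) (ω : Ω) :
    pSum X (k + 1) ω - pSum X k ω = X k ω := by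
  simp [pSum, Finset.sum_range_succ]

theorem scanStat_eq_scanStatR_of_step_ge {Ω : Type*} {X : ℕ → Ω → ℝ} {n : ℕ} {h₂ u : ℝ}
    {ω : Ω} (hh₂ : 1 ≤ h₂) (hstep : ∃ k < n, u ≤ X k ω)
    (hlong : ∀ i j : ℕ, i < j → j ≤ n → h₂ < (j : ℝ) - i →
      (pSum X j ω - pSum X i ω) / Real.sqrt ((j : ℝ) - i) < u) :
    scanStat X n ω = scanStatR X n 1 h₂ ω := by
  obtain ⟨k, hkn, hku⟩ := hstep
  have : Finite {p : ℕ × ℕ // p.1 < p.2 ∧ p.2 ≤ n} :=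
    finite_subtype_of_lt_of_le fun _ hp => hp
  have : Finite {p : ℕ × ℕ // p.1 < p.2 ∧ p.2 ≤ n ∧
      1 ≤ (p.2 : ℝ) - p.1 ∧ (p.2 : ℝ) - p.1 ≤ h₂} :=
    finite_subtype_of_lt_of_le fun _ hp => ⟨hp.1, hp.2.1⟩
  have hstep_mem : (k, k + 1).1 < (k, k + 1).2 ∧ (k, k + 1).2 ≤ n ∧
      1 ≤ ((k + 1 : ℕ) : ℝ) - k ∧ ((k + 1 : ℕ) : ℝ) - k ≤ h₂ := by
    refine ⟨k.lt_succ_self, hkn, ?_, ?_⟩ <;> push_cast <;> linarith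
  have hu : u ≤ scanStatR X n 1 h₂ ω := by
    refine le_ciSup_of_le (Set.finite_range _).bddAbove ⟨(k, k + 1), hstep_mem⟩ ?_
    simpa [pSum_succ_sub] using hku
  have : Nonempty {p : ℕ × ℕ // p.1 < p.2 ∧ p.2 ≤ n} := ⟨⟨_, hstep_mem.1, hstep_mem.2.1⟩⟩
  have : Nonempty {p : ℕ × ℕ // p.1 < p.2 ∧ p.2 ≤ n ∧
      1 ≤ (p.2 : ℝ) - p.1 ∧ (p.2 : ℝ) - p.1 ≤ h₂} := ⟨⟨_, hstep_mem⟩⟩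
  refine le_antisymm (ciSup_le fun ⟨(i, j), hij, hjn⟩ => ?_) (ciSup_le fun p => ?_)
  · by_cases hlen : (j : ℝ) - i ≤ h₂
    · have hone : (1 : ℝ) ≤ (j : ℝ) - i := by
        have : ((i + 1 : ℕ) : ℝ) ≤ j := by exact_mod_cast hij
        push_cast at this
        linarith
      exact le_ciSup_of_le (Set.finite_range _).bddAbove ⟨(i, j), hij, hjn, hone, hlen⟩ le_rfl
    · exact (hlong i j hij hjn (not_le.mp hlen)).le.trans hu
  · exact le_ciSup_of_le (Set.finite_range _).bddAbove ⟨p.1, p.2.1, p.2.2.1⟩ le_rfl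

lemma Real.exp_le_one_add_add_sq_mul_exp_max (y : ℝ) :
    Real.exp y ≤ 1 + y + y ^ 2 * Real.exp (max y 0) := by
  rcases le_or_gt |y| 1 with hy | hy
  · have h := Real.norm_exp_sub_one_sub_id_le (x := y) hy
    rw [Real.norm_eq_abs, Real.norm_eq_abs, sq_abs] at h
    have : y ^ 2 ≤ y ^ 2 * Real.exp (max y 0) :=
      le_mul_of_one_le_right (sq_nonneg y) (Real.one_le_exp (le_max_right y 0))
    linarith [le_abs_self (Real.exp y - 1 - y)]
  · rcases lt_abs.mp hy with hy | hy
    · rw [max_eq_left (by linarith)]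
      have : Real.exp y ≤ y ^ 2 * Real.exp y :=
        le_mul_of_one_le_left (Real.exp_nonneg y) (by nlinarith)
      linarith
    · rw [max_eq_right (by linarith), Real.exp_zero]
      nlinarith [Real.exp_le_one_iff.mpr (show y ≤ 0 by linarith)]

lemma sq_le_mul_exp {x δ : ℝ} (hx : 0 ≤ x) (hδ : 0 < δ) :
    x ^ 2 ≤ 2 / δ ^ 2 * Real.exp (δ * x) := by
  have h := Real.pow_div_factorial_le_exp (δ * x) (mul_nonneg hδ.le hx) 2
  rw [Nat.factorial_two, Nat.cast_two, mul_pow] at h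
  rw [div_mul_eq_mul_div, le_div_iff₀ (by positivity)]
  linarith

lemma exp_mul_le_one_add_add_sq {t t₁ t₂ : ℝ} (ht : 0 ≤ t) (htt₁ : t ≤ t₁) (ht₁₂ : t₁ < t₂)
    (x : ℝ) :
    Real.exp (t * x) ≤ 1 + t * x + t ^ 2 * (x ^ 2 + 2 / (t₂ - t₁) ^ 2 * Real.exp (t₂ * x)) := by
  have hrem : x ^ 2 * Real.exp (max (t * x) 0) ≤
      x ^ 2 + 2 / (t₂ - t₁) ^ 2 * Real.exp (t₂ * x) := by
    rcases le_total x 0 with hx | hx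
    · rw [max_eq_right (mul_nonpos_of_nonneg_of_nonpos ht hx), Real.exp_zero, mul_one]
      exact le_add_of_nonneg_right (by positivity)
    · rw [max_eq_left (mul_nonneg ht hx)]
      calc x ^ 2 * Real.exp (t * x)
          ≤ 2 / (t₂ - t₁) ^ 2 * Real.exp ((t₂ - t₁) * x) * Real.exp (t₁ * x) := by
            gcongr
            exact sq_le_mul_exp hx (sub_pos.mpr ht₁₂)
        _ = 2 / (t₂ - t₁) ^ 2 * Real.exp (t₂ * x) := by
            rw [mul_assoc, ← Real.exp_add]
            ring_nf
        _ ≤ x ^ 2 + 2 / (t₂ - t₁) ^ 2 * Real.exp (t₂ * x) :=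
            le_add_of_nonneg_left (sq_nonneg x)
  calc Real.exp (t * x) ≤ 1 + t * x + (t * x) ^ 2 * Real.exp (max (t * x) 0) :=
        Real.exp_le_one_add_add_sq_mul_exp_max _
    _ ≤ 1 + t * x + t ^ 2 * (x ^ 2 + 2 / (t₂ - t₁) ^ 2 * Real.exp (t₂ * x)) := by
        rw [mul_pow, mul_assoc]
        gcongr

lemma exists_neg_mul_add_mul_sq_le {K L t₁ v c : ℝ} (hK : 0 < K) (hL : 0 < L) (ht₁ : 0 ≤ t₁)
    (hv : 0 ≤ v) (hquad : 4 * K * L * c ≤ v ^ 2) (hlin : 2 * c ≤ t₁ * v) :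
    ∃ t, 0 ≤ t ∧ t ≤ t₁ ∧ -t * v + L * (K * t ^ 2) ≤ -c := by
  -- `v / (2 * K * L)` minimises the quadratic; past `t₁`, the value at `t₁` suffices.
  by_cases hopt : v / (2 * K * L) ≤ t₁
  · refine ⟨v / (2 * K * L), by positivity, hopt, ?_⟩
    have : -(v / (2 * K * L)) * v + L * (K * (v / (2 * K * L)) ^ 2) = -(v ^ 2 / (4 * K * L)) := by
      field_simp
      ring
    rw [this, neg_le_neg_iff, le_div_iff₀ (by positivity)]
    linarith
  · refine ⟨t₁, ht₁, le_rfl, ?_⟩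
    have : t₁ * (2 * K * L) ≤ v := ((le_div_iff₀ (by positivity)).mp (not_le.mp hopt).le)
    nlinarith

lemma add_one_sq_mul_exp_neg_three_mul_log_le {n : ℕ} (hn : 1 ≤ n) :
    ((n : ℝ) + 1) ^ 2 * Real.exp (-(3 * Real.log n)) ≤ 4 / n := by
  have hn' : (1 : ℝ) ≤ n := Nat.one_le_cast.mpr hn
  have hn0 : (0 : ℝ) < n := by linarith
  rw [show 3 * Real.log n = Real.log (n ^ 3) by rw [Real.log_pow]; norm_num, Real.exp_neg,
    Real.exp_log (by positivity), div_eq_mul_inv,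
    show (4 : ℝ) * (n : ℝ)⁻¹ = 4 * (n : ℝ) ^ 2 * ((n : ℝ) ^ 3)⁻¹ by field_simp]
  gcongr
  nlinarith

lemma tendsto_rpow_div_sqrt_atTop {β : ℝ} (hβ : 1 / 2 < β) :
    Tendsto (fun y : ℝ => (y / 2) ^ β / Real.sqrt y) atTop atTop := by
  refine ((tendsto_rpow_atTop (sub_pos.mpr hβ)).atTop_div_const (by positivity :
    (0 : ℝ) < 2 ^ β)).congr' ?_
  filter_upwards [eventually_gt_atTop 0] with y hy
  rw [Real.rpow_sub hy, Real.div_rpow hy.le zero_le_two, Real.sqrt_eq_rpow]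
  ring

lemma forall_exp_neg_rpow_lt_of_le {α α' x₀ : ℝ} {p : ℝ → ℝ} (hαα' : α ≤ α')
    (h : ∀ x, x₀ ≤ x → Real.exp (-(x ^ α)) < p x) :
    ∀ x, max x₀ 1 ≤ x → Real.exp (-(x ^ α')) < p x := fun x hx =>
  calc Real.exp (-(x ^ α')) ≤ Real.exp (-(x ^ α)) :=
        Real.exp_le_exp.mpr <| neg_le_neg <|
          Real.rpow_le_rpow_of_exponent_le ((le_max_right _ _).trans hx) hαα'
    _ < p x := h x ((le_max_left _ _).trans hx)

lemma tendsto_measureReal_of_compl_subset_union {Ω ι : Type*} [MeasurableSpace Ω] {μ : Measure Ω}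
    [IsProbabilityMeasure μ] {l : Filter ι} {E A B : ι → Set Ω}
    (hsub : ∀ᶠ n in l, (E n)ᶜ ⊆ A n ∪ B n)
    (hA : Tendsto (fun n => μ.real (A n)) l (nhds 0))
    (hB : Tendsto (fun n => μ.real (B n)) l (nhds 0)) :
    Tendsto (fun n => μ.real (E n)) l (nhds 1) := by
  have hlow : ∀ᶠ n in l, 1 - (μ.real (A n) + μ.real (B n)) ≤ μ.real (E n) := by
    filter_upwards [hsub] with n hn
    have h1 := measureReal_union_le (μ := μ) (E n) (E n)ᶜ
    have h2 := measureReal_mono (μ := μ) hn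
    have h3 := measureReal_union_le (μ := μ) (A n) (B n)
    rw [Set.union_compl_self, probReal_univ] at h1
    linarith
  refine tendsto_of_tendsto_of_tendsto_of_le_of_le' ?_ tendsto_const_nhds hlow
    (Eventually.of_forall fun _ => measureReal_le_one)
  simpa using (hA.add hB).const_sub 1

lemma measureReal_exists_pair_le {Ω : Type*} [MeasurableSpace Ω] {μ : Measure Ω}
    [IsFiniteMeasure μ] {S : ℕ → ℕ → Set Ω} {Q : ℕ → ℕ → Prop} {n : ℕ} {ε : ℝ} (hε : 0 ≤ ε)
    (hS : ∀ i j, i < j → j ≤ n → Q i j → μ.real (S i j) ≤ ε) :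
    μ.real {ω | ∃ i j, i < j ∧ j ≤ n ∧ Q i j ∧ ω ∈ S i j} ≤ ((n : ℝ) + 1) ^ 2 * ε := by
  classical
  set P := (Finset.range (n + 1) ×ˢ Finset.range (n + 1)).filter fun p => p.1 < p.2 ∧ Q p.1 p.2
  have hsub : {ω | ∃ i j, i < j ∧ j ≤ n ∧ Q i j ∧ ω ∈ S i j} ⊆ ⋃ p ∈ P, S p.1 p.2 := by
    rintro ω ⟨i, j, hij, hjn, hQ, hω⟩
    refine Set.mem_biUnion (x := (i, j)) (Finset.mem_coe.mpr ?_) hω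
    simp only [P, Finset.mem_filter, Finset.mem_product, Finset.mem_range]
    exact ⟨⟨by omega, by omega⟩, hij, hQ⟩
  have hcard : (P.card : ℝ) ≤ ((n : ℝ) + 1) ^ 2 := by
    have : P.card ≤ (n + 1) * (n + 1) := by
      simpa only [Finset.card_product, Finset.card_range] using
        Finset.card_filter_le (Finset.range (n + 1) ×ˢ Finset.range (n + 1))
          fun p => p.1 < p.2 ∧ Q p.1 p.2
    exact_mod_cast this.trans_eq (sq (n + 1)).symm
  calc μ.real {ω | ∃ i j, i < j ∧ j ≤ n ∧ Q i j ∧ ω ∈ S i j} ≤ ∑ p ∈ P, μ.real (S p.1 p.2) :=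
        (measureReal_mono hsub (measure_ne_top _ _)).trans (measureReal_biUnion_finset_le _ _)
    _ ≤ P.card * ε := by
        refine (Finset.sum_le_card_nsmul _ _ _ fun p hp => ?_).trans_eq (nsmul_eq_mul _ _)
        simp only [P, Finset.mem_filter, Finset.mem_product, Finset.mem_range] at hp
        exact hS _ _ hp.2.1 (by omega) hp.2.2
    _ ≤ ((n : ℝ) + 1) ^ 2 * ε := by gcongr

lemma tendsto_natCast_mul_measureReal_gt {Ω : Type*} [MeasurableSpace Ω] {μ : Measure Ω}
    {Y : Ω → ℝ} {α x₀ : ℝ} (hα : 0 < α)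
    (htail : ∀ x, x₀ ≤ x → Real.exp (-(x ^ α)) < μ.real {ω | x < Y ω}) :
    Tendsto (fun n : ℕ => n * μ.real {ω | (Real.log n / 2) ^ α⁻¹ < Y ω}) atTop atTop := by
  have hlog : Tendsto (fun n : ℕ => Real.log n / 2) atTop atTop :=
    (Real.tendsto_log_atTop.comp tendsto_natCast_atTop_atTop).atTop_div_const two_pos
  refine tendsto_atTop_mono' _ ?_ (Real.tendsto_exp_atTop.comp hlog)
  filter_upwards [((tendsto_rpow_atTop (inv_pos.mpr hα)).comp hlog).eventually_ge_atTop x₀,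
    eventually_gt_atTop 0] with n hx hn
  have hn0 : (0 : ℝ) < n := Nat.cast_pos.mpr hn
  have h := htail ((Real.log n / 2) ^ α⁻¹) hx
  rw [Real.rpow_inv_rpow (by positivity) hα.ne'] at h
  show Real.exp (Real.log n / 2) ≤ _
  calc Real.exp (Real.log n / 2) = Real.exp (Real.log n) * Real.exp (-(Real.log n / 2)) := by
        rw [← Real.exp_add]; ring_nf
    _ ≤ n * μ.real {ω | (Real.log n / 2) ^ α⁻¹ < Y ω} := by
        rw [Real.exp_log hn0]; gcongr

section Chernoff

variable {Ω : Type*} [MeasurableSpace Ω] {μ : Measure Ω} [IsProbabilityMeasure μ]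
  {X : ℕ → Ω → ℝ}

lemma cgf_le_mul_sq {Y : Ω → ℝ} {t t₁ t₂ : ℝ} (hY : MemLp Y 2 μ) (hmean : μ[Y] = 0)
    (hexp : Integrable (fun ω => Real.exp (t₂ * Y ω)) μ)
    (ht : 0 ≤ t) (htt₁ : t ≤ t₁) (ht₁₂ : t₁ < t₂) :
    cgf Y μ t ≤ (∫ ω, Y ω ^ 2 ∂μ + 2 / (t₂ - t₁) ^ 2 * mgf Y μ t₂) * t ^ 2 := by
  set C := 2 / (t₂ - t₁) ^ 2
  have hY1 : Integrable Y μ := hY.integrable one_le_two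
  have hrem : Integrable (fun ω => Y ω ^ 2 + C * Real.exp (t₂ * Y ω)) μ :=
    hY.integrable_sq.add (hexp.const_mul C)
  have hlin : Integrable (fun ω => 1 + t * Y ω) μ := (integrable_const 1).add (hY1.const_mul t)
  have hbound : Integrable (fun ω => 1 + t * Y ω + t ^ 2 * (Y ω ^ 2 + C * Real.exp (t₂ * Y ω))) μ :=
    hlin.add (hrem.const_mul _)
  have hpt : ∀ ω, Real.exp (t * Y ω) ≤
      1 + t * Y ω + t ^ 2 * (Y ω ^ 2 + C * Real.exp (t₂ * Y ω)) :=
    fun ω => exp_mul_le_one_add_add_sq ht htt₁ ht₁₂ (Y ω)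
  have hint : Integrable (fun ω => Real.exp (t * Y ω)) μ :=
    hbound.mono' (hY.1.aemeasurable.const_mul t).exp.aestronglyMeasurable (ae_of_all _ fun ω => by
      rw [Real.norm_of_nonneg (Real.exp_nonneg _)]; exact hpt ω)
  have hmgf : mgf Y μ t ≤ 1 + t ^ 2 * (∫ ω, Y ω ^ 2 ∂μ + C * mgf Y μ t₂) := by
    calc mgf Y μ t ≤ ∫ ω, (1 + t * Y ω + t ^ 2 * (Y ω ^ 2 + C * Real.exp (t₂ * Y ω))) ∂μ :=
          integral_mono hint hbound hpt
      _ = 1 + t ^ 2 * (∫ ω, Y ω ^ 2 ∂μ + C * mgf Y μ t₂) := by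
          rw [integral_add hlin (hrem.const_mul _),
            integral_add (integrable_const 1) (hY1.const_mul t), integral_const_mul,
            integral_const_mul, integral_add hY.integrable_sq (hexp.const_mul C),
            integral_const_mul, hmean]
          simp [mgf]
  calc cgf Y μ t ≤ mgf Y μ t - 1 := Real.log_le_sub_one_of_pos (mgf_pos hint)
    _ ≤ (∫ ω, Y ω ^ 2 ∂μ + C * mgf Y μ t₂) * t ^ 2 := by linarith

lemma exists_pos_forall_cgf_le_mul_sq {Y : Ω → ℝ} {t₁ t₂ : ℝ} (hY : MemLp Y 2 μ)
    (hmean : μ[Y] = 0) (hexp : Integrable (fun ω => Real.exp (t₂ * Y ω)) μ) (ht₁₂ : t₁ < t₂) :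
    ∃ K > 0, ∀ t ∈ Set.Icc 0 t₁, cgf Y μ t ≤ K * t ^ 2 :=
  ⟨_, add_pos_of_nonneg_of_pos (integral_nonneg fun _ => sq_nonneg _)
      (mul_pos (div_pos two_pos (pow_pos (sub_pos.mpr ht₁₂) 2)) (mgf_pos hexp)),
    fun _ ht => cgf_le_mul_sq hY hmean hexp ht.1 ht.2 ht₁₂⟩

lemma measureReal_pSum_sub_ge_le (hmeas : ∀ i, Measurable (X i)) (hindep : iIndepFun X μ)
    (hident : ∀ i, IdentDistrib (X i) (X 0) μ μ) {t : ℝ} (ht : 0 ≤ t)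
    (hint : Integrable (fun ω => Real.exp (t * X 0 ω)) μ) {i j : ℕ} (hij : i ≤ j) (v : ℝ) :
    μ.real {ω | v ≤ pSum X j ω - pSum X i ω} ≤
      Real.exp (-t * v + ((j : ℝ) - i) * cgf (X 0) μ t) := by
  have hexp_meas : Measurable fun x => Real.exp (t * x) := by fun_prop
  have hident_exp : ∀ k, IdentDistrib (fun ω => Real.exp (t * X k ω))
      (fun ω => Real.exp (t * X 0 ω)) μ μ :=
    fun k => (hident k).comp hexp_meas
  have hints : ∀ k ∈ Finset.Ico i j, Integrable (fun ω => Real.exp (t * X k ω)) μ :=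
    fun k _ => (hident_exp k).integrable_iff.mpr hint
  have hsum : ∀ ω, pSum X j ω - pSum X i ω = (∑ k ∈ Finset.Ico i j, X k) ω := fun ω => by
    rw [Finset.sum_apply, Finset.sum_Ico_eq_sub _ hij, pSum, pSum]
  have hcgf : cgf (∑ k ∈ Finset.Ico i j, X k) μ t = ((j : ℝ) - i) * cgf (X 0) μ t := by
    rw [hindep.cgf_sum hmeas hints, Finset.sum_congr rfl fun k _ => ?_, Finset.sum_const,
      Nat.card_Ico, nsmul_eq_mul, Nat.cast_sub hij]
    simp only [cgf, mgf, (hident_exp k).integral_eq]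
  simp_rw [hsum, ← hcgf]
  exact measure_ge_le_exp_cgf v ht (hindep.integrable_exp_mul_sum hmeas hints)

lemma measureReal_pSum_sub_ge_le_exp_neg (hmeas : ∀ i, Measurable (X i))
    (hindep : iIndepFun X μ) (hident : ∀ i, IdentDistrib (X i) (X 0) μ μ) {K t₁ : ℝ}
    (hK : 0 < K) (ht₁ : 0 ≤ t₁)
    (hint : ∀ t ∈ Set.Icc 0 t₁, Integrable (fun ω => Real.exp (t * X 0 ω)) μ)
    (hcgf : ∀ t ∈ Set.Icc 0 t₁, cgf (X 0) μ t ≤ K * t ^ 2)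
    {i j : ℕ} (hij : i < j) {v c : ℝ} (hv : 0 ≤ v)
    (hquad : 4 * K * ((j : ℝ) - i) * c ≤ v ^ 2) (hlin : 2 * c ≤ t₁ * v) :
    μ.real {ω | v ≤ pSum X j ω - pSum X i ω} ≤ Real.exp (-c) := by
  have hL : (0 : ℝ) < (j : ℝ) - i := sub_pos.mpr (Nat.cast_lt.mpr hij)
  obtain ⟨t, ht, htt₁, hexp⟩ := exists_neg_mul_add_mul_sq_le hK hL ht₁ hv hquad hlin
  refine (measureReal_pSum_sub_ge_le hmeas hindep hident ht (hint t ⟨ht, htt₁⟩) hij.le v).trans ?_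
  gcongr
  nlinarith [hcgf t ⟨ht, htt₁⟩]

lemma measureReal_window_ge_le (hmeas : ∀ i, Measurable (X i)) (hindep : iIndepFun X μ)
    (hident : ∀ i, IdentDistrib (X i) (X 0) μ μ) {K t₁ : ℝ} (hK : 0 < K) (ht₁ : 0 ≤ t₁)
    (hint : ∀ t ∈ Set.Icc 0 t₁, Integrable (fun ω => Real.exp (t * X 0 ω)) μ)
    (hcgf : ∀ t ∈ Set.Icc 0 t₁, cgf (X 0) μ t ≤ K * t ^ 2)
    {a y u : ℝ} (hy : 0 ≤ y) (hu : 0 ≤ u) (hquad : 12 * K * y ≤ u ^ 2)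
    (hlin : 6 * Real.sqrt y ≤ t₁ * Real.sqrt a * u)
    {i j : ℕ} (hij : i < j) (hlen : a * y ≤ (j : ℝ) - i) :
    μ.real {ω | u ≤ (pSum X j ω - pSum X i ω) / Real.sqrt ((j : ℝ) - i)} ≤
      Real.exp (-(3 * y)) := by
  have hL : (0 : ℝ) < (j : ℝ) - i := sub_pos.mpr (Nat.cast_lt.mpr hij)
  have hsqrtL : 0 < Real.sqrt ((j : ℝ) - i) := Real.sqrt_pos.mpr hL
  have hset : {ω | u ≤ (pSum X j ω - pSum X i ω) / Real.sqrt ((j : ℝ) - i)} =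
      {ω | u * Real.sqrt ((j : ℝ) - i) ≤ pSum X j ω - pSum X i ω} := by
    ext ω
    exact le_div_iff₀ hsqrtL
  rw [hset]
  refine measureReal_pSum_sub_ge_le_exp_neg hmeas hindep hident hK ht₁ hint hcgf hij
    (by positivity) ?_ ?_
  · rw [mul_pow, Real.sq_sqrt hL.le]
    nlinarith
  · have hay : Real.sqrt a * Real.sqrt y ≤ Real.sqrt ((j : ℝ) - i) := by
      rw [← Real.sqrt_mul' a hy]
      exact Real.sqrt_le_sqrt hlen
    have hyy : Real.sqrt y * Real.sqrt y = y := Real.mul_self_sqrt hy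
    calc 2 * (3 * y) = 6 * Real.sqrt y * Real.sqrt y := by rw [mul_assoc 6, hyy]; ring
      _ ≤ t₁ * Real.sqrt a * u * Real.sqrt y := by gcongr
      _ = t₁ * (u * (Real.sqrt a * Real.sqrt y)) := by ring
      _ ≤ t₁ * (u * Real.sqrt ((j : ℝ) - i)) := by gcongr

theorem tendsto_measureReal_exists_long_window_ge (hmeas : ∀ i, Measurable (X i))
    (hindep : iIndepFun X μ) (hident : ∀ i, IdentDistrib (X i) (X 0) μ μ) {K t₁ a : ℝ}
    (hK : 0 < K) (ht₁ : 0 < t₁) (ha : 0 < a)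
    (hint : ∀ t ∈ Set.Icc 0 t₁, Integrable (fun ω => Real.exp (t * X 0 ω)) μ)
    (hcgf : ∀ t ∈ Set.Icc 0 t₁, cgf (X 0) μ t ≤ K * t ^ 2) {u : ℕ → ℝ}
    (hu : Tendsto (fun n : ℕ => u n / Real.sqrt (Real.log n)) atTop atTop) :
    Tendsto (fun n : ℕ => μ.real {ω | ∃ i j : ℕ, i < j ∧ j ≤ n ∧ a * Real.log n < (j : ℝ) - i ∧
      u n ≤ (pSum X j ω - pSum X i ω) / Real.sqrt ((j : ℝ) - i)}) atTop (nhds 0) := by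
  have hlog : Tendsto (fun n : ℕ => Real.log n) atTop atTop :=
    Real.tendsto_log_atTop.comp tendsto_natCast_atTop_atTop
  refine squeeze_zero' (Eventually.of_forall fun _ => measureReal_nonneg) ?_
    (tendsto_const_div_atTop_nhds_zero_nat 4)
  filter_upwards [hu.eventually_ge_atTop (max (Real.sqrt (12 * K)) (6 / (t₁ * Real.sqrt a))),
    hlog.eventually_gt_atTop 0, eventually_ge_atTop 1] with n hw hlogn hn
  set w := u n / Real.sqrt (Real.log n)
  have hsqrt : 0 < Real.sqrt (Real.log n) := Real.sqrt_pos.mpr hlogn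
  have hu_eq : u n = w * Real.sqrt (Real.log n) := (div_mul_cancel₀ _ hsqrt.ne').symm
  have hw0 : 0 ≤ w := (Real.sqrt_nonneg _).trans ((le_max_left _ _).trans hw)
  have hw_quad : 12 * K ≤ w ^ 2 := by
    rw [← Real.sqrt_le_left hw0]
    exact (le_max_left _ _).trans hw
  have hw_lin : 6 ≤ t₁ * Real.sqrt a * w :=
    (div_le_iff₀' (by positivity)).mp ((le_max_right _ _).trans hw)
  refine (measureReal_exists_pair_le (Real.exp_nonneg _) fun i j hij _ hlen =>
    measureReal_window_ge_le hmeas hindep hident hK ht₁.le hint hcgf hlogn.le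
      (hu_eq ▸ by positivity) ?_ ?_ hij hlen.le).trans
    (add_one_sq_mul_exp_neg_three_mul_log_le hn)
  · rw [hu_eq, mul_pow, Real.sq_sqrt hlogn.le]
    nlinarith
  · rw [hu_eq, ← mul_assoc]
    nlinarith

lemma measureReal_forall_lt_le (hmeas : ∀ i, Measurable (X i)) (hindep : iIndepFun X μ)
    (hident : ∀ i, IdentDistrib (X i) (X 0) μ μ) (n : ℕ) (u : ℝ) :
    μ.real {ω | ∀ k < n, X k ω < u} ≤ Real.exp (-(n * μ.real {ω | u < X 0 ω})) := by
  have hinter : {ω | ∀ k < n, X k ω < u} = ⋂ k ∈ Finset.range n, X k ⁻¹' Set.Iio u := by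
    ext ω
    simp
  have hprod : μ.real {ω | ∀ k < n, X k ω < u} = μ.real (X 0 ⁻¹' Set.Iio u) ^ n := by
    rw [hinter, measureReal_def, hindep.meas_biInter fun k _ => ⟨_, measurableSet_Iio, rfl⟩,
      Finset.prod_congr rfl fun k _ => (hident k).measure_mem_eq measurableSet_Iio,
      Finset.prod_const, Finset.card_range, ENNReal.toReal_pow, measureReal_def]
  have hcompl : μ.real (X 0 ⁻¹' Set.Iio u) ≤ 1 - μ.real {ω | u < X 0 ω} := by
    have hsub : X 0 ⁻¹' Set.Iio u ⊆ {ω | u < X 0 ω}ᶜ :=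
      fun ω (h1 : X 0 ω < u) (h2 : u < X 0 ω) => lt_asymm h1 h2
    calc μ.real (X 0 ⁻¹' Set.Iio u) ≤ μ.real {ω | u < X 0 ω}ᶜ := measureReal_mono hsub
      _ = 1 - μ.real {ω | u < X 0 ω} := by
        rw [measureReal_compl (measurableSet_lt measurable_const (hmeas 0)), probReal_univ]
  calc μ.real {ω | ∀ k < n, X k ω < u} ≤ (1 - μ.real {ω | u < X 0 ω}) ^ n := by
        rw [hprod]; gcongr
    _ ≤ Real.exp (-μ.real {ω | u < X 0 ω}) ^ n :=
        pow_le_pow_left₀ (measureReal_nonneg.trans hcompl) (Real.one_sub_le_exp_neg _) n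
    _ = Real.exp (-(n * μ.real {ω | u < X 0 ω})) := by
        rw [← Real.exp_nat_mul]
        ring_nf

theorem tendsto_measureReal_forall_lt (hmeas : ∀ i, Measurable (X i)) (hindep : iIndepFun X μ)
    (hident : ∀ i, IdentDistrib (X i) (X 0) μ μ) {u : ℕ → ℝ}
    (hu : Tendsto (fun n : ℕ => n * μ.real {ω | u n < X 0 ω}) atTop atTop) :
    Tendsto (fun n : ℕ => μ.real {ω | ∀ k < n, X k ω < u n}) atTop (nhds 0) :=
  squeeze_zero (fun _ => measureReal_nonneg)
    (fun n => measureReal_forall_lt_le hmeas hindep hident n (u n))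
    (Real.tendsto_exp_neg_atTop_nhds_zero.comp hu)

end Chernoff

theorem sublogarithmic_small_scales_general
    {Ω : Type*} [MeasureSpace Ω] [IsProbabilityMeasure (ℙ : Measure Ω)]
    (X : ℕ → Ω → ℝ)
    (hmeas : ∀ i, Measurable (X i))
    (hindep : iIndepFun X ℙ)
    (hident : ∀ i, IdentDistrib (X i) (X 0) ℙ ℙ)
    (hL2 : MemLp (X 0) 2 ℙ)
    (hmean : ∫ ω, X 0 ω ∂ℙ = 0)
    (t₀ : ℝ) (ht₀ : 0 < t₀)
    (hmgf : ∀ t : ℝ, 0 ≤ t → t < t₀ → Integrable (fun ω => Real.exp (t * X 0 ω)) ℙ)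
    (α : ℝ) (hα : α < 2)
    (htail : ∃ x₀ : ℝ, ∀ x : ℝ, x₀ ≤ x →
      Real.exp (-(x ^ α)) < (ℙ {ω | x < X 0 ω}).toReal)
    (a : ℝ) (ha : 0 < a) :
    Tendsto (fun n : ℕ =>
        (ℙ {ω | scanStat X n ω = scanStatR X n 1 (a * Real.log n) ω}).toReal)
      atTop (nhds 1) := by
  obtain ⟨x₀, htail⟩ := htail
  have hexp₁ : ∀ t ∈ Set.Icc 0 (t₀ / 4), Integrable (fun ω => Real.exp (t * X 0 ω)) ℙ :=
    fun t ht => hmgf t ht.1 (by linarith [ht.2])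
  obtain ⟨K, hK, hcgf⟩ := exists_pos_forall_cgf_le_mul_sq (t₁ := t₀ / 4) hL2 hmean
    (hmgf (t₀ / 2) (by positivity) (by linarith)) (by linarith)
  -- Raising `α` to `max α 1` only weakens the tail assumption.
  have hβ : 1 / 2 < (max α 1)⁻¹ := by
    rw [one_div, inv_lt_inv₀ two_pos (one_pos.trans_le (le_max_right α 1))]
    exact max_lt hα one_lt_two
  have hlog : Tendsto (fun n : ℕ => Real.log n) atTop atTop :=
    Real.tendsto_log_atTop.comp tendsto_natCast_atTop_atTop
  refine tendsto_measureReal_of_compl_subset_union ?_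
    (tendsto_measureReal_forall_lt hmeas hindep hident
      (tendsto_natCast_mul_measureReal_gt (one_pos.trans_le (le_max_right α 1))
        (forall_exp_neg_rpow_lt_of_le (le_max_left α 1) htail)))
    (tendsto_measureReal_exists_long_window_ge hmeas hindep hident hK (by positivity) ha hexp₁
      hcgf ((tendsto_rpow_div_sqrt_atTop hβ).comp hlog))
  filter_upwards [(hlog.const_mul_atTop ha).eventually_ge_atTop 1] with n hn ω hω
  by_contra hAB
  simp only [Set.mem_union, Set.mem_ofPred_eq, not_or, not_forall, not_lt, not_exists, not_and,
    not_le] at hAB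
  exact hω (scanStat_eq_scanStatR_of_step_ge hn (by simpa using hAB.1) hAB.2)

/-- **Theorem 1.8 (sublogarithmic case).**
If `φ(t) = log E e^{t X₁}` is finite on `[0, t₀)` and `P[X₁ > x] > e^{-x^α}` for
large `x`, with `α < 2`, then for every `a > 0`,
`P[M_n = M_n(1, a log n)] → 1`. -/
theorem sublogarithmic_small_scales
    {Ω : Type*} [MeasureSpace Ω] [IsProbabilityMeasure (ℙ : Measure Ω)]
    (X : ℕ → Ω → ℝ)
    (hmeas : ∀ i, Measurable (X i))
    (hindep : iIndepFun X ℙ)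
    (hident : ∀ i, IdentDistrib (X i) (X 0) ℙ ℙ)
    (hL2 : MemLp (X 0) 2 ℙ)
    (hmean : ∫ ω, X 0 ω ∂ℙ = 0)
    (hvar : ∫ ω, (X 0 ω) ^ 2 ∂ℙ = 1)
    (t₀ : ℝ) (ht₀ : 0 < t₀)
    (hmgf : ∀ t : ℝ, 0 ≤ t → t < t₀ → Integrable (fun ω => Real.exp (t * X 0 ω)) ℙ)
    (α : ℝ) (hα : α < 2)
    (htail : ∃ x₀ : ℝ, ∀ x : ℝ, x₀ ≤ x →
      Real.exp (-(x ^ α)) < (ℙ {ω | x < X 0 ω}).toReal)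
    (a : ℝ) (ha : 0 < a) :
    Tendsto (fun n : ℕ =>
        (ℙ {ω | scanStat X n ω = scanStatR X n 1 (a * Real.log n) ω}).toReal)
      atTop (nhds 1) :=
  sublogarithmic_small_scales_general X hmeas hindep hident hL2 hmean t₀ ht₀ hmgf α hα htail a ha

end
end

section
/- Fix p ∈ (1/2, 1) and let σ = √(4p(1−p)). Let φ(t) = −(2pt)/σ + log(1 + p e^{2t/σ} − p) be the cumulant generating function of the standardized Bernoulli variable X = (Y − (2p−1))/σ, where P[Y = 1] = p, P[Y = −1] = 1−p. Then φ(t) < t²/2 for all t > 0. -/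
/-!
With `c = 2/σ` and `B = (Y + 1)/2 ∈ {0, 1}` one has `X = c (B - p)`, so
`φ t = log (1 - p + p e^{ct}) - pct` with `p (1 - p) c² = 1`.
Both `φ` and `φ'` vanish at `0`, and
`φ'' t = e^{ct} / (1 - p + p e^{ct})² < 1` for `t > 0` because
`(1 - p + p u)² - u = (u - 1)(p² u - (1 - p)²)` is positive for `u > 1` when `p ≥ 1/2`.
Integrating `1 - φ'' > 0` twice gives `φ t < t²/2`.
-/

open Real Set

lemma pos_of_hasDerivAt_of_pos {f f' : ℝ → ℝ} (hf : ∀ t, 0 ≤ t → HasDerivAt f (f' t) t)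
    (h0 : f 0 = 0) (hf' : ∀ t, 0 < t → 0 < f' t) {t : ℝ} (ht : 0 < t) : 0 < f t := by
  have hmono : StrictMonoOn f (Ici 0) := by
    refine strictMonoOn_of_deriv_pos (convex_Ici 0)
      (fun s hs => (hf s hs).continuousAt.continuousWithinAt) fun s hs => ?_
    rw [interior_Ici] at hs
    rw [(hf s (le_of_lt hs)).deriv]
    exact hf' s hs
  simpa [h0] using hmono self_mem_Ici ht.le ht

lemma lt_sq_one_sub_add_mul {p u : ℝ} (hp : 1 / 2 ≤ p) (hu : 1 < u) :
    u < (1 - p + p * u) ^ 2 := by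
  have hfactor : (1 - p + p * u) ^ 2 - u = (u - 1) * (p ^ 2 * u - (1 - p) ^ 2) := by ring
  have hpos : 0 < p ^ 2 * u - (1 - p) ^ 2 := by
    nlinarith [mul_pos (pow_pos (by linarith : (0 : ℝ) < p) 2) (sub_pos.2 hu)]
  nlinarith [mul_pos (sub_pos.2 hu) hpos]

noncomputable def bernoulliMGF (p c t : ℝ) : ℝ := 1 - p + p * exp (c * t)

noncomputable def bernoulliCGF (p c t : ℝ) : ℝ := log (bernoulliMGF p c t) - p * c * t

section

variable {p c t : ℝ}

lemma one_le_bernoulliMGF (hp : 0 ≤ p) (hc : 0 ≤ c) (ht : 0 ≤ t) : 1 ≤ bernoulliMGF p c t := by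
  have : 1 ≤ exp (c * t) := one_le_exp (mul_nonneg hc ht)
  unfold bernoulliMGF
  nlinarith

lemma hasDerivAt_bernoulliMGF : HasDerivAt (bernoulliMGF p c) (p * c * exp (c * t)) t := by
  have hexp := ((hasDerivAt_id t).const_mul c).exp
  exact ((hexp.const_mul p).const_add (1 - p)).congr_deriv (by simp only [id]; ring)

lemma hasDerivAt_bernoulliCGF (hM : bernoulliMGF p c t ≠ 0) :
    HasDerivAt (bernoulliCGF p c) (p * c * exp (c * t) / bernoulliMGF p c t - p * c) t := by
  have hlin : HasDerivAt (fun s => p * c * s) (p * c) t := by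
    simpa using (hasDerivAt_id t).const_mul (p * c)
  exact (hasDerivAt_bernoulliMGF.log hM).sub hlin

lemma hasDerivAt_deriv_bernoulliCGF (hM : bernoulliMGF p c t ≠ 0) :
    HasDerivAt (fun s => p * c * exp (c * s) / bernoulliMGF p c s - p * c)
      (p * (1 - p) * c ^ 2 * exp (c * t) / bernoulliMGF p c t ^ 2) t := by
  have hnum : HasDerivAt (fun s => p * c * exp (c * s)) (p * c * (c * exp (c * t))) t := by
    have hexp := ((hasDerivAt_id t).const_mul c).exp
    simpa [mul_comm] using hexp.const_mul (p * c)
  refine ((hnum.div hasDerivAt_bernoulliMGF hM).sub_const (p * c)).congr_deriv ?_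
  simp only [bernoulliMGF]
  ring

lemma bernoulliCGF_second_deriv_lt_one (hp : 1 / 2 ≤ p) (hc : 0 < c)
    (hpc : p * (1 - p) * c ^ 2 = 1) (ht : 0 < t) :
    p * (1 - p) * c ^ 2 * exp (c * t) / bernoulliMGF p c t ^ 2 < 1 := by
  have hu : 1 < exp (c * t) := one_lt_exp_iff.2 (mul_pos hc ht)
  have hlt : exp (c * t) < bernoulliMGF p c t ^ 2 := lt_sq_one_sub_add_mul hp hu
  rw [hpc, one_mul, div_lt_one (by linarith)]
  exact hlt

theorem bernoulliCGF_lt_sq_div_two (hp : 1 / 2 ≤ p) (hc : 0 < c)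
    (hpc : p * (1 - p) * c ^ 2 = 1) (ht : 0 < t) : bernoulliCGF p c t < t ^ 2 / 2 := by
  have hM : ∀ s, 0 ≤ s → bernoulliMGF p c s ≠ 0 := fun s hs =>
    (one_pos.trans_le (one_le_bernoulliMGF (by linarith) hc.le hs)).ne'
  have hslope : ∀ s, 0 < s → 0 < s - (p * c * exp (c * s) / bernoulliMGF p c s - p * c) := by
    intro s hs
    refine pos_of_hasDerivAt_of_pos
      (f := fun s => s - (p * c * exp (c * s) / bernoulliMGF p c s - p * c))
      (f' := fun s => 1 - p * (1 - p) * c ^ 2 * exp (c * s) / bernoulliMGF p c s ^ 2)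
      (fun r hr => (hasDerivAt_id r).sub (hasDerivAt_deriv_bernoulliCGF (hM r hr)))
      (by simp [bernoulliMGF])
      (fun r hr => sub_pos.2 (bernoulliCGF_second_deriv_lt_one hp hc hpc hr)) hs
  have hgap : 0 < t ^ 2 / 2 - bernoulliCGF p c t := by
    refine pos_of_hasDerivAt_of_pos (f := fun s => s ^ 2 / 2 - bernoulliCGF p c s)
      (fun s hs => ?_) ?_ hslope ht
    · have hsq : HasDerivAt (fun s : ℝ => s ^ 2 / 2) s s := by
        simpa using (hasDerivAt_pow 2 s).div_const 2
      exact hsq.sub (hasDerivAt_bernoulliCGF (hM s hs))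
    · simp [bernoulliCGF, bernoulliMGF]
  linarith

end

/-- **Proposition 1.10 (non-symmetric Bernoulli, `p ∈ (1/2,1)`).**
Let `σ = √(4p(1-p))` and let
`φ(t) = -(2pt)/σ + log(1 + p e^{2t/σ} - p)` be the cumulant generating function of the
standardized Bernoulli variable `X = (Y - (2p-1))/σ` with `P[Y=1]=p`, `P[Y=-1]=1-p`.
Then `φ(t) < t²/2` for all `t > 0`. -/
theorem bernoulli_superlogarithmic (p : ℝ) (hp1 : 1 / 2 < p) (hp2 : p < 1)
    (σ : ℝ) (hσ : σ = Real.sqrt (4 * p * (1 - p)))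
    (φ : ℝ → ℝ)
    (hφ : ∀ t : ℝ, φ t = -(2 * p * t) / σ + Real.log (1 + p * Real.exp (2 * t / σ) - p)) :
    ∀ t : ℝ, 0 < t → φ t < t ^ 2 / 2 := by
  intro t ht
  have hσ2 : σ ^ 2 = 4 * p * (1 - p) := by
    rw [hσ, sq_sqrt]
    nlinarith
  have hσpos : 0 < σ := by
    rw [hσ]
    exact sqrt_pos.2 (by nlinarith)
  have hpc : p * (1 - p) * (2 / σ) ^ 2 = 1 := by
    have hp0 : p ≠ 0 := by linarith
    have hq0 : 1 - p ≠ 0 := by linarith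
    rw [div_pow, hσ2]
    field_simp
    ring
  have hφt : φ t = bernoulliCGF p (2 / σ) t := by
    rw [hφ, bernoulliCGF, bernoulliMGF, div_mul_eq_mul_div]
    ring_nf
  rw [hφt]
  exact bernoulliCGF_lt_sq_div_two hp1.le (by positivity) hpc ht
end

section
/- Fix d ∈ ℕ and, for B ∈ ℕ, partition ℤ^d into disjoint discrete cubes Bu + {0,…,B−1}^d, u ∈ ℤ^d; write v_1 ∼ v_2 if v_1, v_2 lie in the same cube of this partition, and let ∂_B V denote the union of those cubes having non-empty intersection with both V and ℤ^d \ V. Let 𝕍_n ⊂ ℤ^d be a sequence of finite sets such that for every B ∈ ℕ, |∂_B 𝕍_n| = o(|𝕍_n|) as n → ∞. Then for every ε > 0, lim_{B→∞} limsup_{n→∞} (1/|𝕍_n|) Σ_{v_1, v_2 ∈ 𝕍_n, v_1 ≁ v_2} e^{−ε ‖v_1 − v_2‖} = 0, where ‖·‖ is the sup-norm on ℝ^d. -/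
/-!
Put `q = e^{-ε/(d+1)}`, so that `e^{-ε‖v₁-v₂‖} = q^{‖v₁-v₂‖} · q^{d‖v₁-v₂‖}`. If `v₁ ≁ v₂`, some
coordinate of `v₂` leaves the block of `v₁`, so `‖v₁-v₂‖` exceeds the depth of `v₁` in its cube
in that coordinate. Hence the first factor is at most `Σ_i q^{depth_i(v₁)}`, and the second is at
most `∏_i q^{|v₁ i - v₂ i|}`, whose sum over `v₂` is at most `(2/(1-q))^d`. Summing over `v₁`,
the points of `𝕍` whose cube leaves `𝕍` lie in `∂_B 𝕍` and contribute at most `d` each, while a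
cube inside `𝕍` contributes `O(d B^{d-1})`, i.e. `O(1/B)` per point. So the normalised double
sum is `O(|∂_B 𝕍|/|𝕍| + 1/B)`.
-/

open Filter

noncomputable section

/-- `v` and `w` lie in the same cube `Bu + {0,…,B−1}^d` of the decomposition of `ℤ^d`
into discrete cubes of side length `B`. -/
def sameCube {d : ℕ} (B : ℕ) (v w : Fin d → ℤ) : Prop :=
  ∀ i : Fin d, Int.fdiv (v i) B = Int.fdiv (w i) B

instance {d : ℕ} (B : ℕ) (v w : Fin d → ℤ) : Decidable (sameCube B v w) := by
  unfold sameCube; infer_instance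

/-- The `B`-boundary `∂_B V` of `V ⊆ ℤ^d`: the union of the cubes of the decomposition
which meet both `V` and its complement. -/
def cubeBoundary {d : ℕ} (B : ℕ) (V : Set (Fin d → ℤ)) : Set (Fin d → ℤ) :=
  {w | (∃ v ∈ V, sameCube B w v) ∧ ∃ v ∉ V, sameCube B w v}

/-- The sup-norm of the difference of two lattice points, as a real number. -/
def supDist {d : ℕ} (v w : Fin d → ℤ) : ℝ :=
  ((Finset.univ.sup fun i : Fin d => (v i - w i).natAbs : ℕ) : ℝ)

open Finset

lemma sum_pow_natAbs_sub_le {q : ℝ} (hq₀ : 0 ≤ q) (hq₁ : q < 1) (a : ℤ) (s : Finset ℤ) :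
    ∑ k ∈ s, q ^ (a - k).natAbs ≤ 2 / (1 - q) := by
  have geom (t : Finset ℕ) : ∑ n ∈ t, q ^ n ≤ 1 / (1 - q) := by
    rw [one_div, ← tsum_geometric_of_lt_one hq₀ hq₁]
    exact (summable_geometric_of_lt_one hq₀ hq₁).sum_le_tsum t fun n _ => pow_nonneg hq₀ n
  have half (p : ℤ → Prop) [DecidablePred p]
      (hp : ∀ x y, p x → p y → (a - x).natAbs = (a - y).natAbs → x = y) :
      ∑ k ∈ s with p k, q ^ (a - k).natAbs ≤ 1 / (1 - q) := by
    rw [← sum_image fun x hx y hy => hp x y (mem_filter.1 hx).2 (mem_filter.1 hy).2]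
    exact geom _
  rw [← sum_filter_add_sum_filter_not s (· ≤ a),
    show 2 / (1 - q) = 1 / (1 - q) + 1 / (1 - q) by ring]
  exact add_le_add (half _ fun x y _ _ _ => by omega) (half _ fun x y _ _ _ => by omega)

lemma Int.ediv_eq_iff_mem_Icc {B : ℕ} (hB : 1 ≤ B) (k c : ℤ) :
    k / B = c ↔ k ∈ Icc (B * c) (B * c + B - 1) := by
  have hB' : (0 : ℤ) < B := by exact_mod_cast hB
  rw [mem_Icc, le_antisymm_iff, ← Int.lt_add_one_iff, Int.ediv_lt_iff_lt_mul hB',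
    Int.le_ediv_iff_mul_le hB', add_mul, one_mul, mul_comm c]
  omega

def blockDepth (B : ℕ) (k : ℤ) : ℕ :=
  min (k % B).natAbs (B - 1 - k % B).natAbs

lemma blockDepth_lt_natAbs_sub {B : ℕ} (hB : 1 ≤ B) {k l : ℤ} (h : k / B ≠ l / B) :
    blockDepth B k < (k - l).natAbs := by
  have hk := (Int.ediv_eq_iff_mem_Icc hB k (k / B)).1 rfl
  have hl : l ∉ Icc (B * (k / B)) (B * (k / B) + B - 1) :=
    fun hl => h ((Int.ediv_eq_iff_mem_Icc hB l _).2 hl).symm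
  rw [mem_Icc] at hk hl
  rw [blockDepth, Int.emod_def]
  generalize (B : ℤ) * (k / B) = m at hk hl
  omega

lemma pow_blockDepth_le {q : ℝ} (hq₀ : 0 ≤ q) (B : ℕ) (k : ℤ) :
    q ^ blockDepth B k ≤ q ^ (B * (k / B) - k).natAbs + q ^ (B * (k / B) + B - 1 - k).natAbs := by
  have h₁ : (k % B).natAbs = (B * (k / B) - k).natAbs := by rw [Int.emod_def]; omega
  have h₂ : (B - 1 - k % B).natAbs = (B * (k / B) + B - 1 - k).natAbs := by
    rw [Int.emod_def]; omega
  rw [blockDepth, h₁, h₂]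
  rcases min_choice (B * (k / B) - k).natAbs (B * (k / B) + B - 1 - k).natAbs with h | h <;>
    rw [h] <;> linarith [pow_nonneg hq₀ (B * (k / B) - k).natAbs,
      pow_nonneg hq₀ (B * (k / B) + B - 1 - k).natAbs]

lemma sum_Icc_pow_blockDepth_le {q : ℝ} (hq₀ : 0 ≤ q) (hq₁ : q < 1) {B : ℕ} (hB : 1 ≤ B)
    (c : ℤ) : ∑ k ∈ Icc (B * c) (B * c + B - 1), q ^ blockDepth B k ≤ 4 / (1 - q) :=
  calc ∑ k ∈ Icc (B * c) (B * c + B - 1), q ^ blockDepth B k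
      ≤ ∑ k ∈ Icc (B * c) (B * c + B - 1),
          (q ^ (B * c - k).natAbs + q ^ (B * c + B - 1 - k).natAbs) :=
        sum_le_sum fun k hk => by
          simpa only [(Int.ediv_eq_iff_mem_Icc hB k c).2 hk] using pow_blockDepth_le hq₀ B k
    _ ≤ 2 / (1 - q) + 2 / (1 - q) := by
        rw [sum_add_distrib]
        gcongr <;> exact sum_pow_natAbs_sub_le hq₀ hq₁ _ _
    _ = 4 / (1 - q) := by ring

lemma Fintype.sum_piFinset_apply_eq {ι α M : Type*} [Fintype ι] [DecidableEq ι] [DecidableEq α]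
    [AddCommMonoid M] (t : ι → Finset α) (i : ι) (f : α → M) :
    ∑ g ∈ Fintype.piFinset t, f (g i) = (∏ j ∈ univ.erase i, #(t j)) • ∑ a ∈ t i, f a := by
  rw [← sum_fiberwise_of_maps_to (t := t i) (g := fun g => g i)
    fun g hg => Fintype.mem_piFinset.1 hg i, smul_sum]
  refine Finset.sum_congr rfl fun a ha => ?_
  rw [Finset.sum_congr rfl fun g hg => by rw [(mem_filter.1 hg).2], sum_const,
    Fintype.card_filter_piFinset_eq_of_mem t i ha]

section Cubes

variable {d B : ℕ}

def cubeIndex (B : ℕ) (v : Fin d → ℤ) : Fin d → ℤ := fun i => v i / B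

def cube (B : ℕ) (u : Fin d → ℤ) : Finset (Fin d → ℤ) :=
  Fintype.piFinset fun i => Icc (B * u i) (B * u i + B - 1)

lemma sameCube_iff_cubeIndex_eq {v w : Fin d → ℤ} :
    sameCube B v w ↔ cubeIndex B v = cubeIndex B w := by
  simp only [sameCube, Int.fdiv_eq_ediv_of_nonneg _ (Int.natCast_nonneg B), funext_iff, cubeIndex]

lemma mem_cube (hB : 1 ≤ B) {u v : Fin d → ℤ} : v ∈ cube B u ↔ cubeIndex B v = u := by
  simp only [cube, Fintype.mem_piFinset, ← Int.ediv_eq_iff_mem_Icc hB, funext_iff, cubeIndex]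

lemma card_cube (B : ℕ) (u : Fin d → ℤ) : #(cube B u) = B ^ d := by
  simp [cube, Fintype.card_piFinset, Int.card_Icc]

lemma pairwiseDisjoint_cube (hB : 1 ≤ B) (I : Set (Fin d → ℤ)) : I.PairwiseDisjoint (cube B) :=
  fun _ _ _ _ hne => disjoint_left.2 fun _ hu hu' =>
    hne (((mem_cube hB).1 hu).symm.trans ((mem_cube hB).1 hu'))

lemma mem_cubeBoundary_of_not_subset (hB : 1 ≤ B) {V : Set (Fin d → ℤ)} {v : Fin d → ℤ}
    (hv : v ∈ V) (h : ¬ ↑(cube B (cubeIndex B v)) ⊆ V) : v ∈ cubeBoundary B V := by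
  obtain ⟨w, hw, hwV⟩ := Set.not_subset.1 h
  exact ⟨⟨v, hv, sameCube_iff_cubeIndex_eq.2 rfl⟩,
    ⟨w, hwV, sameCube_iff_cubeIndex_eq.2 ((mem_cube hB).1 hw).symm⟩⟩

lemma cubeBoundary_finite (hB : 1 ≤ B) (V : Finset (Fin d → ℤ)) :
    (cubeBoundary B (V : Set (Fin d → ℤ))).Finite := by
  classical
  refine (V.biUnion fun v => cube B (cubeIndex B v)).finite_toSet.subset ?_
  rintro w ⟨⟨v, hv, hwv⟩, -⟩
  exact mem_biUnion.2 ⟨v, hv, (mem_cube hB).2 (sameCube_iff_cubeIndex_eq.1 hwv)⟩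

end Cubes

section BoundaryWeight

variable {d B : ℕ} {q : ℝ}

def boundaryWeight (q : ℝ) (B : ℕ) (v : Fin d → ℤ) : ℝ :=
  ∑ i, q ^ blockDepth B (v i)

lemma boundaryWeight_nonneg (hq₀ : 0 ≤ q) (v : Fin d → ℤ) : 0 ≤ boundaryWeight q B v :=
  sum_nonneg fun _ _ => pow_nonneg hq₀ _

lemma boundaryWeight_le (hq₀ : 0 ≤ q) (hq₁ : q ≤ 1) (v : Fin d → ℤ) :
    boundaryWeight q B v ≤ d := by
  unfold boundaryWeight
  simpa using sum_le_card_nsmul univ _ 1 fun i _ => pow_le_one₀ hq₀ hq₁ (n := blockDepth B (v i))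

lemma sum_cube_boundaryWeight_le (hq₀ : 0 ≤ q) (hq₁ : q < 1) (hB : 1 ≤ B) (u : Fin d → ℤ) :
    ∑ v ∈ cube B u, boundaryWeight q B v ≤ #(cube B u) * (d * (4 / (1 - q)) / B) := by
  have hB' : (B : ℝ) ≠ 0 := by positivity
  have coord (i : Fin d) :
      ∑ v ∈ cube B u, q ^ blockDepth B (v i) ≤ B ^ d / B * (4 / (1 - q)) := by
    have hd : d = d - 1 + 1 := by have := i.pos; omega
    rw [cube, Fintype.sum_piFinset_apply_eq _ i fun k => q ^ blockDepth B k, nsmul_eq_mul]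
    simp only [Int.card_Icc, add_sub_cancel_left, sub_add_cancel, Int.toNat_natCast, prod_const,
      card_erase_of_mem (mem_univ i), card_univ, Fintype.card_fin, Nat.cast_pow]
    rw [hd, pow_succ, mul_div_cancel_right₀ _ hB', ← hd]
    gcongr
    exact sum_Icc_pow_blockDepth_le hq₀ hq₁ hB (u i)
  simp only [boundaryWeight]
  rw [sum_comm, card_cube, Nat.cast_pow]
  calc ∑ i, ∑ v ∈ cube B u, q ^ blockDepth B (v i) ≤ ∑ _i : Fin d, B ^ d / B * (4 / (1 - q)) :=
        sum_le_sum fun i _ => coord i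
    _ = B ^ d * (d * (4 / (1 - q)) / B) := by
        rw [sum_const, card_univ, Fintype.card_fin, nsmul_eq_mul]; ring

lemma sum_boundaryWeight_le (hq₀ : 0 ≤ q) (hq₁ : q < 1) (hB : 1 ≤ B) (V : Finset (Fin d → ℤ)) :
    ∑ v ∈ V, boundaryWeight q B v
      ≤ d * (cubeBoundary B (V : Set (Fin d → ℤ))).ncard + d * (4 / (1 - q)) * (#V / B) := by
  classical
  set I := {u ∈ V.image (cubeIndex B) | cube B u ⊆ V}
  have hSV : I.biUnion (cube B) ⊆ V := biUnion_subset.2 fun u hu => (mem_filter.1 hu).2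
  have hdisj := pairwiseDisjoint_cube hB (I : Set (Fin d → ℤ))
  have interior :
      ∑ v ∈ I.biUnion (cube B), boundaryWeight q B v ≤ #V * (d * (4 / (1 - q)) / B) :=
    calc ∑ v ∈ I.biUnion (cube B), boundaryWeight q B v
        ≤ ∑ u ∈ I, #(cube B u) * (d * (4 / (1 - q)) / B) := by
          rw [sum_biUnion hdisj]
          exact sum_le_sum fun u _ => sum_cube_boundaryWeight_le hq₀ hq₁ hB u
      _ = #(I.biUnion (cube B)) * (d * (4 / (1 - q)) / B) := by
          rw [card_biUnion hdisj, Nat.cast_sum, sum_mul]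
      _ ≤ #V * (d * (4 / (1 - q)) / B) := by
          gcongr
  have boundary : ↑(V \ I.biUnion (cube B)) ⊆ cubeBoundary B (V : Set (Fin d → ℤ)) := by
    intro v hv
    obtain ⟨hvV, hvS⟩ := mem_sdiff.1 hv
    refine mem_cubeBoundary_of_not_subset hB hvV fun hsub => hvS (mem_biUnion.2 ?_)
    exact ⟨cubeIndex B v, mem_filter.2 ⟨mem_image_of_mem _ hvV, by exact_mod_cast hsub⟩,
      (mem_cube hB).2 rfl⟩
  have hcard :
      (#(V \ I.biUnion (cube B)) : ℝ) ≤ (cubeBoundary B (V : Set (Fin d → ℤ))).ncard := by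
    exact_mod_cast (Set.ncard_coe_finset _).symm.trans_le
      (Set.ncard_le_ncard boundary (cubeBoundary_finite hB V))
  rw [← sum_sdiff hSV]
  calc _ ≤ #(V \ I.biUnion (cube B)) * (d : ℝ) + #V * (d * (4 / (1 - q)) / B) := by
        gcongr
        simpa using sum_le_card_nsmul _ _ _ fun v _ => boundaryWeight_le hq₀ hq₁.le v
    _ = d * #(V \ I.biUnion (cube B)) + d * (4 / (1 - q)) * (#V / B) := by ring
    _ ≤ _ := by gcongr

end BoundaryWeight

lemma Finset.sum_prod_le_prod_sum_image {ι α : Type*} [Fintype ι] [DecidableEq ι] [DecidableEq α]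
    (V : Finset (ι → α)) (f : ι → α → ℝ) (hf : ∀ i a, 0 ≤ f i a) :
    ∑ w ∈ V, ∏ i, f i (w i) ≤ ∏ i, ∑ a ∈ V.image (· i), f i a := by
  rw [prod_univ_sum]
  exact sum_le_sum_of_subset_of_nonneg
    (fun w hw => Fintype.mem_piFinset.2 fun i => mem_image_of_mem _ hw)
    fun w _ _ => prod_nonneg fun i _ => hf i _

section DoubleSum

variable {d B : ℕ} {q : ℝ}

lemma pow_supNorm_le (hq₀ : 0 ≤ q) (hq₁ : q ≤ 1) (hB : 1 ≤ B) {v w : Fin d → ℤ}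
    (h : ¬ sameCube B v w) :
    q ^ ((d + 1) * univ.sup fun i => (v i - w i).natAbs)
      ≤ boundaryWeight q B v * ∏ i, q ^ (v i - w i).natAbs := by
  set N := univ.sup fun i => (v i - w i).natAbs
  have le_N (j : Fin d) : (v j - w j).natAbs ≤ N :=
    le_sup (f := fun i => (v i - w i).natAbs) (mem_univ j)
  obtain ⟨i, hi⟩ : ∃ i, v i / B ≠ w i / B := by
    simpa [sameCube_iff_cubeIndex_eq, funext_iff, cubeIndex] using h
  have hdepth : blockDepth B (v i) ≤ N :=
    (blockDepth_lt_natAbs_sub hB hi).le.trans (le_N i)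
  have hsum : ∑ j, (v j - w j).natAbs ≤ d * N := by
    simpa using sum_le_card_nsmul univ _ N fun j _ => le_N j
  rw [add_mul, one_mul, pow_add, prod_pow_eq_pow_sum, mul_comm]
  refine mul_le_mul ?_ (pow_le_pow_of_le_one hq₀ hq₁ hsum) (pow_nonneg hq₀ _)
    (boundaryWeight_nonneg hq₀ v)
  exact (pow_le_pow_of_le_one hq₀ hq₁ hdepth).trans
    (single_le_sum (f := fun j => q ^ blockDepth B (v j)) (fun j _ => pow_nonneg hq₀ _)
      (mem_univ i))

lemma sum_not_sameCube_pow_le (hq₀ : 0 ≤ q) (hq₁ : q < 1) (hB : 1 ≤ B) (V : Finset (Fin d → ℤ))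
    (v : Fin d → ℤ) :
    ∑ w ∈ V, (if sameCube B v w then 0 else q ^ ((d + 1) * univ.sup fun i => (v i - w i).natAbs))
      ≤ boundaryWeight q B v * (2 / (1 - q)) ^ d := by
  classical
  have hbw := boundaryWeight_nonneg (B := B) hq₀ v
  calc _ ≤ ∑ w ∈ V, boundaryWeight q B v * ∏ i, q ^ (v i - w i).natAbs := by
        refine sum_le_sum fun w _ => ?_
        split_ifs with h
        · exact mul_nonneg hbw (prod_nonneg fun i _ => pow_nonneg hq₀ _)
        · exact pow_supNorm_le hq₀ hq₁.le hB h
    _ ≤ boundaryWeight q B v * ∏ i, ∑ k ∈ V.image (· i), q ^ (v i - k).natAbs := by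
        rw [← mul_sum]
        gcongr
        exact sum_prod_le_prod_sum_image V (fun i k => q ^ (v i - k).natAbs)
          fun i k => pow_nonneg hq₀ _
    _ ≤ boundaryWeight q B v * (2 / (1 - q)) ^ d := by
        gcongr
        calc ∏ i, ∑ k ∈ V.image (· i), q ^ (v i - k).natAbs ≤ ∏ _i : Fin d, 2 / (1 - q) :=
              prod_le_prod (fun i _ => sum_nonneg fun k _ => pow_nonneg hq₀ _)
                fun i _ => sum_pow_natAbs_sub_le hq₀ hq₁ _ _
          _ = (2 / (1 - q)) ^ d := by rw [prod_const, card_univ, Fintype.card_fin]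

lemma exp_neg_mul_supDist (ε : ℝ) (v w : Fin d → ℤ) :
    Real.exp (-ε * supDist v w)
      = Real.exp (-ε / (d + 1)) ^ ((d + 1) * univ.sup fun i => (v i - w i).natAbs) := by
  rw [← Real.exp_nat_mul, supDist]
  congr 1
  push_cast
  field_simp

lemma exists_sum_sum_not_sameCube_exp_le {ε : ℝ} (hε : 0 < ε) :
    ∃ K : ℝ, 0 ≤ K ∧ ∀ B : ℕ, 1 ≤ B → ∀ V : Finset (Fin d → ℤ),
      ∑ v₁ ∈ V, ∑ v₂ ∈ V, (if sameCube B v₁ v₂ then 0 else Real.exp (-ε * supDist v₁ v₂))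
        ≤ K * ((cubeBoundary B (V : Set (Fin d → ℤ))).ncard + #V / B) := by
  set q := Real.exp (-ε / (d + 1))
  have hq₀ : 0 ≤ q := Real.exp_nonneg _
  have hq₁ : q < 1 :=
    Real.exp_lt_one_iff.2 (div_neg_of_neg_of_pos (neg_neg_of_pos hε) (by positivity))
  have hq : 1 ≤ 4 / (1 - q) := by rw [le_div_iff₀ (by linarith)]; linarith
  refine ⟨(2 / (1 - q)) ^ d * (d * (4 / (1 - q))), by positivity, fun B hB V => ?_⟩
  simp_rw [exp_neg_mul_supDist]
  calc _ ≤ ∑ v ∈ V, boundaryWeight q B v * (2 / (1 - q)) ^ d :=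
        sum_le_sum fun v _ => sum_not_sameCube_pow_le hq₀ hq₁ hB V v
    _ = (2 / (1 - q)) ^ d * ∑ v ∈ V, boundaryWeight q B v := by rw [mul_sum]; simp_rw [mul_comm]
    _ ≤ (2 / (1 - q)) ^ d * (d * (cubeBoundary B (V : Set (Fin d → ℤ))).ncard
          + d * (4 / (1 - q)) * (#V / B)) := by
        gcongr
        exact sum_boundaryWeight_le hq₀ hq₁ hB V
    _ ≤ (2 / (1 - q)) ^ d * (d * (4 / (1 - q)) * (cubeBoundary B (V : Set (Fin d → ℤ))).ncard
          + d * (4 / (1 - q)) * (#V / B)) := by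
        gcongr
        exact le_mul_of_one_le_right (by positivity) hq
    _ = _ := by ring

end DoubleSum

lemma tendsto_limsup_of_le_mul_add_inv {f r : ℕ → ℕ → ℝ} {K : ℝ} (hf : ∀ B n, 0 ≤ f B n)
    (hfr : ∀ B, 1 ≤ B → ∀ n, f B n ≤ K * (r B n + 1 / B))
    (hr : ∀ B, 1 ≤ B → Tendsto (r B) atTop (nhds 0)) :
    Tendsto (fun B => limsup (f B) atTop) atTop (nhds 0) := by
  have hK : Tendsto (fun B : ℕ => K * (0 + 1 / B)) atTop (nhds 0) := by
    simpa [div_eq_mul_inv] using tendsto_const_div_atTop_nhds_zero_nat K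
  refine tendsto_of_tendsto_of_tendsto_of_le_of_le' tendsto_const_nhds hK ?_ ?_ <;>
    filter_upwards [eventually_ge_atTop 1] with B hB <;>
    have hg : Tendsto (fun n => K * (r B n + 1 / B)) atTop (nhds (K * (0 + 1 / B))) :=
      ((hr B hB).add_const _).const_mul K
  · exact le_limsup_of_frequently_le (Frequently.of_forall (hf B))
      (hg.isBoundedUnder_le.mono_le (Eventually.of_forall (hfr B hB)))
  · exact (limsup_le_limsup (Eventually.of_forall (hfr B hB))
      (isBoundedUnder_of ⟨0, hf B⟩).isCoboundedUnder_le hg.isBoundedUnder_le).trans_eq hg.limsup_eq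

theorem double_sum_combinatorial_estimate_general
    (d : ℕ)
    (𝕍 : ℕ → Finset (Fin d → ℤ))
    (hbdry : ∀ B : ℕ, 1 ≤ B →
      Tendsto (fun n : ℕ =>
          ((cubeBoundary B (↑(𝕍 n) : Set (Fin d → ℤ))).ncard : ℝ) / ((𝕍 n).card : ℝ))
        atTop (nhds 0))
    (ε : ℝ) (hε : 0 < ε) :
    Tendsto (fun B : ℕ =>
        limsup (fun n : ℕ =>
            (1 / ((𝕍 n).card : ℝ)) *
              ∑ v₁ ∈ 𝕍 n, ∑ v₂ ∈ 𝕍 n,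
                (if sameCube B v₁ v₂ then 0 else Real.exp (-ε * supDist v₁ v₂)))
          atTop)
      atTop (nhds 0) := by
  obtain ⟨K, hK, hbound⟩ := exists_sum_sum_not_sameCube_exp_le (d := d) hε
  set bd := fun (B n : ℕ) => ((cubeBoundary B (↑(𝕍 n) : Set (Fin d → ℤ))).ncard : ℝ)
  refine tendsto_limsup_of_le_mul_add_inv (K := K) (fun B n => ?_) (fun B hB n => ?_) hbdry
  · exact mul_nonneg (by positivity)
      (sum_nonneg fun _ _ => sum_nonneg fun _ _ => by split_ifs <;> positivity)
  · calc _ ≤ 1 / #(𝕍 n) * (K * (bd B n + #(𝕍 n) / B)) := by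
          gcongr
          exact hbound B hB (𝕍 n)
      _ = K * (bd B n / #(𝕍 n) + #(𝕍 n) / #(𝕍 n) / B) := by ring
      _ ≤ _ := by
          gcongr
          exact div_self_le_one _

/-- **Lemma 4.7 (a combinatorial double-sum estimate).**
Let `𝕍_n ⊂ ℤ^d` be finite sets with `|∂_B 𝕍_n| = o(|𝕍_n|)` for every `B`. Then for
every `ε > 0`,
`lim_{B→∞} limsup_{n→∞} |𝕍_n|⁻¹ Σ_{v₁,v₂ ∈ 𝕍_n, v₁ ≁ v₂} e^{−ε ‖v₁−v₂‖} = 0`. -/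
theorem double_sum_combinatorial_estimate
    (d : ℕ) (hd : 0 < d)
    (𝕍 : ℕ → Finset (Fin d → ℤ))
    (hbdry : ∀ B : ℕ, 1 ≤ B →
      Tendsto (fun n : ℕ =>
          ((cubeBoundary B (↑(𝕍 n) : Set (Fin d → ℤ))).ncard : ℝ) / ((𝕍 n).card : ℝ))
        atTop (nhds 0))
    (ε : ℝ) (hε : 0 < ε) :
    Tendsto (fun B : ℕ =>
        limsup (fun n : ℕ =>
            (1 / ((𝕍 n).card : ℝ)) *
              ∑ v₁ ∈ 𝕍 n, ∑ v₂ ∈ 𝕍 n,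
                (if sameCube B v₁ v₂ then 0 else Real.exp (-ε * supDist v₁ v₂)))
          atTop)
      atTop (nhds 0) :=
  double_sum_combinatorial_estimate_general d 𝕍 hbdry ε hε

end
end
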